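/- For fixed s ≥ 1, the function m ↦ p(m,s) = t(m,s)·m − C(s+t(m,s), t(m,s)−1) is convex on the positive integers: p(m+1,s) − p(m,s) ≥ p(m,s) − p(m−1,s) for all m ≥ 2. Moreover the increment p(m+1,s) − p(m,s) equals the repetition number t(m+1,s). -/
import Mathlib


/-- The repetition number: the least `t` with `m ≤ C(s+t, t)`. -/
noncomputable def tRep (m s : ℕ) : ℕ := sInf {t : ℕ | m ≤ (s + t).choose t}

/-- `p(m,s) = t·m − C(s+t, t−1)` with the convention `C(s,−1) = 0`. -/
noncomputable def pRev (m s : ℕ) : ℤ :=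
  (tRep m s : ℤ) * m -
    (if tRep m s = 0 then 0 else ((s + tRep m s).choose (tRep m s - 1) : ℤ))

/-- `p̃(m,s) = (t−1)·m − C(s+t, t−1) + 1` with the convention `C(s,−1) = 0`. -/
noncomputable def pMod (m s : ℕ) : ℤ :=
  ((tRep m s : ℤ) - 1) * m -
    (if tRep m s = 0 then 0 else ((s + tRep m s).choose (tRep m s - 1) : ℤ)) + 1

lemma tRep_le {m s t : ℕ} (h : m ≤ (s + t).choose t) : tRep m s ≤ t :=
  Nat.sInf_le h

lemma tRep_spec (m s : ℕ) (hs : 1 ≤ s) : m ≤ (s + tRep m s).choose (tRep m s) := by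
  have hne : {t : ℕ | m ≤ (s + t).choose t}.Nonempty := by
    refine ⟨m, ?_⟩
    have h1 : (m + 1).choose m ≤ (s + m).choose m :=
      Nat.choose_le_choose m (by omega)
    have h2 : (m + 1).choose m = m + 1 := Nat.choose_succ_self_right m
    simp only [Set.mem_setOf_eq]
    omega
  exact Nat.sInf_mem hne

lemma tRep_min {m s t : ℕ} (h : t < tRep m s) : (s + t).choose t < m := by
  have := Nat.notMem_of_lt_sInf h
  simp only [Set.mem_setOf_eq, not_le] at this
  exact this

lemma tRep_mono (m s : ℕ) (hs : 1 ≤ s) : tRep m s ≤ tRep (m + 1) s :=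
  tRep_le (le_trans (Nat.le_succ m) (tRep_spec (m + 1) s hs))

lemma tRep_step (m s : ℕ) (hs : 1 ≤ s) : tRep (m + 1) s ≤ tRep m s + 1 := by
  apply tRep_le
  have hP : (s + (tRep m s + 1)).choose (tRep m s + 1)
      = (s + tRep m s).choose (tRep m s) + (s + tRep m s).choose (tRep m s + 1) := by
    have h : s + (tRep m s + 1) = (s + tRep m s) + 1 := by omega
    rw [h, Nat.choose_succ_succ']
  have h1 : 0 < (s + tRep m s).choose (tRep m s + 1) := Nat.choose_pos (by omega)
  have h2 := tRep_spec m s hs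
  omega

lemma pRev_diff (s : ℕ) (hs : 1 ≤ s) (m : ℕ) (hm : 1 ≤ m) :
    pRev (m + 1) s - pRev m s = (tRep (m + 1) s : ℤ) := by
  have hmono := tRep_mono m s hs
  have hstep := tRep_step m s hs
  rcases eq_or_lt_of_le hmono with heq | hlt
  · -- same t
    unfold pRev
    rw [← heq]
    push_cast
    ring
  · -- t (m+1) = t m + 1, and m = choose boundary
    have heq : tRep (m + 1) s = tRep m s + 1 := by omega
    have hb : (s + tRep m s).choose (tRep m s) < m + 1 := tRep_min (by omega)
    have hb2 : m ≤ (s + tRep m s).choose (tRep m s) := tRep_spec m s hs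
    have hm' : m = (s + tRep m s).choose (tRep m s) := by omega
    rcases Nat.eq_zero_or_pos (tRep m s) with h0 | hpos
    · -- t = 0, m = 1
      have hm1 : m = 1 := by rw [hm', h0]; simp
      subst hm1
      unfold pRev
      rw [heq, h0]
      norm_num
    · obtain ⟨k, hk⟩ : ∃ k, tRep m s = k + 1 := ⟨tRep m s - 1, by omega⟩
      have hP : (s + (k + 2)).choose (k + 1)
          = (s + (k + 1)).choose k + (s + (k + 1)).choose (k + 1) := by
        have h : s + (k + 2) = (s + (k + 1)) + 1 := by omega
        rw [h, Nat.choose_succ_succ']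
      unfold pRev
      rw [heq, hk]
      rw [if_neg (by omega : (k + 1 + 1 : ℕ) ≠ 0), if_neg (by omega : (k + 1 : ℕ) ≠ 0)]
      have e1 : (k + 1 + 1 : ℕ) - 1 = k + 1 := by omega
      have e2 : (k + 1 : ℕ) - 1 = k := by omega
      rw [e1, e2]
      have hm'' : (m : ℤ) = ((s + (k + 1)).choose (k + 1) : ℤ) := by
        exact_mod_cast hm'.trans (by rw [hk])
      have hs2 : s + (k + 1 + 1) = s + (k + 2) := by omega
      rw [hs2]
      have hPZ : ((s + (k + 2)).choose (k + 1) : ℤ)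
          = ((s + (k + 1)).choose k : ℤ) + ((s + (k + 1)).choose (k + 1) : ℤ) := by
        exact_mod_cast hP
      rw [hPZ, ← hm'']
      push_cast
      ring

/-- For fixed `s ≥ 1`, the map `m ↦ p(m,s)` is convex on the positive integers:
`p(m+1,s) − p(m,s) ≥ p(m,s) − p(m−1,s)` for `m ≥ 2`; moreover the increment
`p(m+1,s) − p(m,s)` equals the repetition number `t(m+1,s)`. -/
theorem stmt10 (s : ℕ) (hs : 1 ≤ s) :
    (∀ m : ℕ, 2 ≤ m →
      pRev m s - pRev (m - 1) s ≤ pRev (m + 1) s - pRev m s) ∧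
    (∀ m : ℕ, 1 ≤ m →
      pRev (m + 1) s - pRev m s = (tRep (m + 1) s : ℤ)) := by
  constructor
  · intro m hm
    have h1 : pRev (m - 1 + 1) s - pRev (m - 1) s = (tRep (m - 1 + 1) s : ℤ) :=
      pRev_diff s hs (m - 1) (by omega)
    have hmm : m - 1 + 1 = m := by omega
    rw [hmm] at h1
    have h2 : pRev (m + 1) s - pRev m s = (tRep (m + 1) s : ℤ) :=
      pRev_diff s hs m (by omega)
    rw [h1, h2]
    exact_mod_cast tRep_mono m s hs
  · exact pRev_diff s hs
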